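/- (Strong right invariance.) If h : 𝒜 → ℂ is a linear functional invariant for the coaction α, i.e. (h⊗id)(α(a)) = h(a)·1 for all a ∈ 𝒜, then for all a, b ∈ 𝒜 one has (h⊗id)(α(a)·(b⊗1)) = (h⊗id)((a⊗1)·((id⊗S)α(b))). -/
import Mathlib


/- Setting: `P` a Hopf algebra over `ℂ` (antipode `S`), `A` a unital `ℂ`-algebra and
`α : A → A ⊗ P` a unital algebra homomorphism which is a right coaction.
STATEMENT 10 (strong right invariance): if `h : A → ℂ` is an `α`-invariant functional,
i.e. `(h ⊗ id)(α(a)) = h(a)·1`, then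
`(h ⊗ id)(α(a)·(b ⊗ 1)) = (h ⊗ id)((a ⊗ 1)·((id ⊗ S)α(b)))` for all `a b`. -/

open scoped TensorProduct
open TensorProduct

section
variable {A P : Type*} [Ring A] [Algebra ℂ A] [Ring P] [HopfAlgebra ℂ P]

/-- `h ⊗ id : A ⊗ P → P`. -/
noncomputable def hsl (h : A →ₗ[ℂ] ℂ) : A ⊗[ℂ] P →ₗ[ℂ] P :=
  (TensorProduct.lid ℂ P).toLinearMap ∘ₗ TensorProduct.map h LinearMap.id

lemma hsl_tmul (h : A →ₗ[ℂ] ℂ) (x : A) (p : P) : hsl h (x ⊗ₜ[ℂ] p) = h x • p := by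
  simp [hsl]

lemma hsl_mul_one_tmul (h : A →ₗ[ℂ] ℂ) (y : A ⊗[ℂ] P) (p : P) :
    hsl h (y * ((1 : A) ⊗ₜ[ℂ] p)) = hsl h y * p := by
  induction y using TensorProduct.induction_on with
  | zero => simp
  | tmul x q => simp [hsl_tmul, Algebra.TensorProduct.tmul_mul_tmul, smul_mul_assoc]
  | add y z hy hz => simp [add_mul, hy, hz]

lemma hsl_mul_tmul (h : A →ₗ[ℂ] ℂ) (y : A ⊗[ℂ] P) (x : A) (p : P) :
    hsl h (y * (x ⊗ₜ[ℂ] p)) = hsl h (y * (x ⊗ₜ[ℂ] 1)) * p := by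
  have hx : (x ⊗ₜ[ℂ] p : A ⊗[ℂ] P) = (x ⊗ₜ[ℂ] 1) * ((1:A) ⊗ₜ[ℂ] p) := by
    rw [Algebra.TensorProduct.tmul_mul_tmul, mul_one, one_mul]
  rw [hx, ← mul_assoc, hsl_mul_one_tmul]

lemma rid_tmul_one (w : A ⊗[ℂ] ℂ) :
    TensorProduct.map LinearMap.id (Algebra.linearMap ℂ P) w
      = (TensorProduct.rid ℂ A w) ⊗ₜ[ℂ] (1 : P) := by
  induction w using TensorProduct.induction_on with
  | zero => simp
  | tmul x c => rw [TensorProduct.map_tmul, LinearMap.id_apply, Algebra.linearMap_apply,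
      TensorProduct.rid_tmul, Algebra.algebraMap_eq_smul_one, TensorProduct.tmul_smul,
      TensorProduct.smul_tmul']
  | add y z hy hz => simp [hy, hz, add_tmul]

theorem strong_right_invariance
    (α : A →ₐ[ℂ] A ⊗[ℂ] P)
    -- `α` is coassociative: `(α ⊗ id) ∘ α = (id ⊗ Δ_P) ∘ α`
    (hcoassoc : ∀ a : A,
      (TensorProduct.assoc ℂ A P P)
          (TensorProduct.map α.toLinearMap LinearMap.id (α a)) =
        TensorProduct.map LinearMap.id (Coalgebra.comul (R := ℂ)) (α a))
    -- `α` is counital: `(id ⊗ ε_P) ∘ α = id`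
    (hcounit : ∀ a : A,
      (TensorProduct.rid ℂ A)
          (TensorProduct.map LinearMap.id (Coalgebra.counit (R := ℂ)) (α a)) = a)
    -- `h` is invariant: `(h ⊗ id)(α(a)) = h(a)·1`
    (h : A →ₗ[ℂ] ℂ)
    (h_inv : ∀ a : A, hsl h (α a) = h a • 1) :
    ∀ a b : A,
      hsl h (α a * (b ⊗ₜ[ℂ] (1 : P))) =
        hsl h ((a ⊗ₜ[ℂ] (1 : P)) *
          TensorProduct.map LinearMap.id (HopfAlgebra.antipode (R := ℂ)) (α b)) := by
  intro a b
  set S : P →ₗ[ℂ] P := HopfAlgebra.antipode (R := ℂ) with hS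
  set K : (A ⊗[ℂ] P) ⊗[ℂ] P →ₗ[ℂ] P :=
    LinearMap.mul' ℂ P ∘ₗ TensorProduct.map ((hsl h) ∘ₗ LinearMap.mulLeft ℂ (α a)) S with hK
  have hKapp : ∀ (y : A ⊗[ℂ] P) (q : P), K (y ⊗ₜ[ℂ] q) = hsl h (α a * y) * S q := by
    intro y q; simp [hK]
  -- Step A : RHS = K (map α id (α b))
  have stepA :
      hsl h ((a ⊗ₜ[ℂ] (1:P)) * TensorProduct.map LinearMap.id S (α b))
        = K (TensorProduct.map α.toLinearMap LinearMap.id (α b)) := by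
    have hmaps : ((hsl h) ∘ₗ LinearMap.mulLeft ℂ ((a : A) ⊗ₜ[ℂ] (1:P))
          ∘ₗ TensorProduct.map LinearMap.id S)
        = K ∘ₗ TensorProduct.map α.toLinearMap LinearMap.id := by
      apply TensorProduct.ext'
      intro x p
      simp only [LinearMap.comp_apply, TensorProduct.map_tmul, LinearMap.id_apply,
        LinearMap.mulLeft_apply, hKapp, AlgHom.toLinearMap_apply]
      rw [Algebra.TensorProduct.tmul_mul_tmul, one_mul, hsl_tmul,
        ← map_mul, h_inv, smul_mul_assoc, one_mul]
    exact LinearMap.congr_fun hmaps (α b)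
  rw [stepA]
  -- Step B : coassociativity
  have stepB : TensorProduct.map α.toLinearMap LinearMap.id (α b)
      = (TensorProduct.assoc ℂ A P P).symm
          (TensorProduct.map LinearMap.id (Coalgebra.comul (R := ℂ)) (α b)) := by
    rw [← hcoassoc b]; simp
  rw [stepB]
  -- auxiliary: K ∘ assoc.symm on x ⊗ z
  have aux : ∀ (x : A) (z : P ⊗[ℂ] P),
      K ((TensorProduct.assoc ℂ A P P).symm (x ⊗ₜ[ℂ] z))
        = hsl h (α a * (x ⊗ₜ[ℂ] 1)) * (LinearMap.mul' ℂ P (S.lTensor P z)) := by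
    intro x z
    induction z using TensorProduct.induction_on with
    | zero => simp only [tmul_zero, LinearEquiv.map_zero, LinearMap.map_zero, mul_zero]
    | tmul p q =>
        rw [TensorProduct.assoc_symm_tmul]
        rw [hKapp, hsl_mul_tmul]
        simp [mul_assoc]
    | add y z hy hz => simp [tmul_add, hy, hz, mul_add]
  -- Step C : collapse with the antipode axiom and counitality
  have stepC : K ((TensorProduct.assoc ℂ A P P).symm
        (TensorProduct.map LinearMap.id (Coalgebra.comul (R := ℂ)) (α b)))
      = hsl h (α a * ((TensorProduct.map LinearMap.id
          ((Algebra.linearMap ℂ P) ∘ₗ (Coalgebra.counit (R := ℂ) : P →ₗ[ℂ] ℂ))) (α b))) := by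
    have hmaps : (K ∘ₗ (TensorProduct.assoc ℂ A P P).symm.toLinearMap
          ∘ₗ TensorProduct.map LinearMap.id (Coalgebra.comul (R := ℂ)))
        = (hsl h) ∘ₗ LinearMap.mulLeft ℂ (α a)
          ∘ₗ TensorProduct.map LinearMap.id
              ((Algebra.linearMap ℂ P) ∘ₗ (Coalgebra.counit (R := ℂ) : P →ₗ[ℂ] ℂ)) := by
      apply TensorProduct.ext'
      intro x p
      simp only [LinearMap.comp_apply, TensorProduct.map_tmul, LinearMap.id_apply,
        LinearEquiv.coe_coe, LinearMap.mulLeft_apply]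
      rw [aux x, hS, HopfAlgebra.mul_antipode_lTensor_comul_apply]
      conv_rhs => rw [hsl_mul_tmul]
      rw [Algebra.linearMap_apply]
    exact LinearMap.congr_fun hmaps (α b)
  rw [stepC]
  -- Step D : counitality
  have hsplit : (TensorProduct.map (LinearMap.id : A →ₗ[ℂ] A)
        ((Algebra.linearMap ℂ P) ∘ₗ (Coalgebra.counit (R := ℂ) : P →ₗ[ℂ] ℂ)))
      = (TensorProduct.map LinearMap.id (Algebra.linearMap ℂ P))
          ∘ₗ (TensorProduct.map LinearMap.id (Coalgebra.counit (R := ℂ))) := by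
    rw [← TensorProduct.map_comp, LinearMap.id_comp]
  rw [hsplit, LinearMap.comp_apply, rid_tmul_one, hcounit]

end
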